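/- On so(3,1) with structure equations de¹ = e²³ - e⁵⁶, de² = -e¹³ + e⁴⁶, de³ = e¹² - e⁴⁵, de⁴ = e²⁶, de⁵ = e³⁴, de⁶ = e¹⁵, the pair ω = e¹⁴ + e²⁵ - e³⁶, ρ = -e¹²⁶ - e¹³⁵ + e²³⁴ + e⁴⁵⁶ satisfies dρ = 0 and d(ω∧ω) = 0. -/

import Mathlib

/-!
STATEMENT 10: On so(3,1) with structure equations de¹ = e²³ - e⁵⁶, de² = -e¹³ + e⁴⁶,
de³ = e¹² - e⁴⁵, de⁴ = e²⁶, de⁵ = e³⁴, de⁶ = e¹⁵, the pair ω = e¹⁴ + e²⁵ - e³⁶,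
ρ = -e¹²⁶ - e¹³⁵ + e²³⁴ + e⁴⁵⁶ satisfies dρ = 0 and d(ω∧ω) = 0.

Model: indices shifted to 0,…,5; forms encoded by basis values; d is the
Chevalley–Eilenberg differential; ω∧ω via the shuffle formula.
-/

/-- Value of e^a ∧ e^b on (e_i, e_j). -/
def wf (a b i j : Fin 6) : ℝ :=
  (if a = i then (1:ℝ) else 0) * (if b = j then (1:ℝ) else 0) -
  (if a = j then (1:ℝ) else 0) * (if b = i then (1:ℝ) else 0)

/-- Value of e^a ∧ e^b ∧ e^c on (e_i, e_j, e_k). -/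
def tf (a b c i j k : Fin 6) : ℝ :=
  (if a = i then (1:ℝ) else 0) * ((if b = j then (1:ℝ) else 0) * (if c = k then (1:ℝ) else 0)
      - (if b = k then (1:ℝ) else 0) * (if c = j then (1:ℝ) else 0))
  - (if a = j then (1:ℝ) else 0) * ((if b = i then (1:ℝ) else 0) * (if c = k then (1:ℝ) else 0)
      - (if b = k then (1:ℝ) else 0) * (if c = i then (1:ℝ) else 0))
  + (if a = k then (1:ℝ) else 0) * ((if b = i then (1:ℝ) else 0) * (if c = j then (1:ℝ) else 0)
      - (if b = j then (1:ℝ) else 0) * (if c = i then (1:ℝ) else 0))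

/-- Structure equations of so(3,1). -/
def dSO31 (k i j : Fin 6) : ℝ :=
  if k = 0 then wf 1 2 i j - wf 4 5 i j
  else if k = 1 then -(wf 0 2 i j) + wf 3 5 i j
  else if k = 2 then wf 0 1 i j - wf 3 4 i j
  else if k = 3 then wf 1 5 i j
  else if k = 4 then wf 2 3 i j
  else wf 0 4 i j

/-- Structure constants: the e^m-coefficient of [e_i,e_j] is -(de^m)(e_i,e_j). -/
def BcSO31 (m i j : Fin 6) : ℝ := -(dSO31 m i j)

/-- Coefficients of ω = e¹⁴ + e²⁵ - e³⁶. -/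
def omSO (i j : Fin 6) : ℝ := wf 0 3 i j + wf 1 4 i j - wf 2 5 i j

/-- Coefficients of ρ = -e¹²⁶ - e¹³⁵ + e²³⁴ + e⁴⁵⁶. -/
def rhoSO (i j k : Fin 6) : ℝ :=
  -(tf 0 1 5 i j k) - tf 0 2 4 i j k + tf 1 2 3 i j k + tf 3 4 5 i j k

/-- Basis values of ω∧ω. -/
noncomputable def omomSO (i j k l : Fin 6) : ℝ :=
  (1/4 : ℝ) * ∑ σ : Equiv.Perm (Fin 4),
    ((Equiv.Perm.sign σ : ℤ) : ℝ) *
      omSO (![i,j,k,l] (σ 0)) (![i,j,k,l] (σ 1)) * omSO (![i,j,k,l] (σ 2)) (![i,j,k,l] (σ 3))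

/-- CE differential of a 3-form, evaluated on a basis 4-tuple. -/
def d3SO (r : Fin 6 → Fin 6 → Fin 6 → ℝ) (a b c d : Fin 6) : ℝ :=
  -(∑ m : Fin 6, BcSO31 m a b * r m c d) + (∑ m : Fin 6, BcSO31 m a c * r m b d)
  - (∑ m : Fin 6, BcSO31 m a d * r m b c) - (∑ m : Fin 6, BcSO31 m b c * r m a d)
  + (∑ m : Fin 6, BcSO31 m b d * r m a c) - (∑ m : Fin 6, BcSO31 m c d * r m a b)

/-- CE differential of a 4-form, evaluated on a basis 5-tuple. -/
noncomputable def d4SO (t : Fin 6 → Fin 6 → Fin 6 → Fin 6 → ℝ) (a b c d e : Fin 6) : ℝ :=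
  -(∑ m : Fin 6, BcSO31 m a b * t m c d e) + (∑ m : Fin 6, BcSO31 m a c * t m b d e)
  - (∑ m : Fin 6, BcSO31 m a d * t m b c e) + (∑ m : Fin 6, BcSO31 m a e * t m b c d)
  - (∑ m : Fin 6, BcSO31 m b c * t m a d e) + (∑ m : Fin 6, BcSO31 m b d * t m a c e)
  - (∑ m : Fin 6, BcSO31 m b e * t m a c d) - (∑ m : Fin 6, BcSO31 m c d * t m a b e)
  + (∑ m : Fin 6, BcSO31 m c e * t m a b d) - (∑ m : Fin 6, BcSO31 m d e * t m a b c)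

/-!
Both identities are finite computations in the Chevalley–Eilenberg complex of a 6-dimensional
Lie algebra. The only step that is not mere evaluation is the antisymmetrisation defining ω∧ω:
for a 2-form it collapses to (ω∧ω)(e_i,e_j,e_k,e_l) = 2(ω_ij ω_kl − ω_ik ω_jl + ω_il ω_jk).
After that every quantity is the image of an integer-valued function, and the vanishing of dρ and
d(ω∧ω) is checked by evaluation on all 6⁴ resp. 6⁵ basis tuples.
-/

open Equiv

theorem sum_perm_fin_succ {M : Type*} [AddCommMonoid M] {n : ℕ} (f : Perm (Fin (n + 1)) → M) :
    ∑ σ, f σ = ∑ p : Fin (n + 1), ∑ e : Perm (Fin n), f (Perm.decomposeFin.symm (p, e)) := by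
  rw [← Fintype.sum_prod_type', Fintype.sum_equiv Perm.decomposeFin.symm _ _ (fun _ => rfl)]

theorem sum_perm_four_sign_mul {R : Type*} [CommRing R] (g : Fin 4 → Fin 4 → R)
    (hg : ∀ a b, g b a = -g a b) :
    ∑ σ : Perm (Fin 4), ((Perm.sign σ : ℤ) : R) * g (σ 0) (σ 1) * g (σ 2) (σ 3)
      = 8 * (g 0 1 * g 2 3 - g 0 2 * g 1 3 + g 0 3 * g 1 2) := by
  rw [show (2 : Fin 4) = Fin.succ 1 from rfl, show (3 : Fin 4) = Fin.succ (Fin.succ 1) from rfl]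
  simp only [sum_perm_fin_succ, Fintype.sum_unique, Fin.sum_univ_succ,
    Perm.decomposeFin_symm_apply_zero, Perm.decomposeFin_symm_apply_one,
    Perm.decomposeFin_symm_apply_succ, Perm.decomposeFin.symm_sign]
  simp [Fin.default_eq_zero, swap_apply_def, Fin.ext_iff,
    hg 1 0, hg 2 0, hg 3 0, hg 2 1, hg 3 1, hg 3 2]
  ring

theorem omSO_swap (i j : Fin 6) : omSO j i = -omSO i j := by
  simp only [omSO, wf]
  ring

theorem omomSO_eq (i j k l : Fin 6) :
    omomSO i j k l = 2 * (omSO i j * omSO k l - omSO i k * omSO j l + omSO i l * omSO j k) := by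
  rw [omomSO, sum_perm_four_sign_mul (fun a b => omSO (![i, j, k, l] a) (![i, j, k, l] b))
    fun _ _ => omSO_swap _ _]
  simp only [Matrix.cons_val_zero, Matrix.cons_val_one, Matrix.cons_val_two,
    Matrix.cons_val_three, Matrix.head_cons, Matrix.tail_cons]
  ring

/- Integer transcriptions of the real-valued definitions, which the kernel can evaluate;
the structure constants `BcSO31 = -dSO31` are absorbed into the signs of the differentials. -/

def kron (a i : Fin 6) : ℤ := if a = i then 1 else 0

def wfInt (a b i j : Fin 6) : ℤ := kron a i * kron b j - kron a j * kron b i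

def tfInt (a b c i j k : Fin 6) : ℤ :=
  kron a i * (kron b j * kron c k - kron b k * kron c j)
    - kron a j * (kron b i * kron c k - kron b k * kron c i)
    + kron a k * (kron b i * kron c j - kron b j * kron c i)

def dSO31Int (k i j : Fin 6) : ℤ :=
  if k = 0 then wfInt 1 2 i j - wfInt 4 5 i j
  else if k = 1 then -(wfInt 0 2 i j) + wfInt 3 5 i j
  else if k = 2 then wfInt 0 1 i j - wfInt 3 4 i j
  else if k = 3 then wfInt 1 5 i j
  else if k = 4 then wfInt 2 3 i j
  else wfInt 0 4 i j

def omSOInt (i j : Fin 6) : ℤ := wfInt 0 3 i j + wfInt 1 4 i j - wfInt 2 5 i j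

def rhoSOInt (i j k : Fin 6) : ℤ :=
  -(tfInt 0 1 5 i j k) - tfInt 0 2 4 i j k + tfInt 1 2 3 i j k + tfInt 3 4 5 i j k

def omomSOInt (i j k l : Fin 6) : ℤ :=
  2 * (omSOInt i j * omSOInt k l - omSOInt i k * omSOInt j l + omSOInt i l * omSOInt j k)

def d3SOInt (r : Fin 6 → Fin 6 → Fin 6 → ℤ) (a b c d : Fin 6) : ℤ :=
  (∑ m : Fin 6, dSO31Int m a b * r m c d) - (∑ m : Fin 6, dSO31Int m a c * r m b d)
  + (∑ m : Fin 6, dSO31Int m a d * r m b c) + (∑ m : Fin 6, dSO31Int m b c * r m a d)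
  - (∑ m : Fin 6, dSO31Int m b d * r m a c) + (∑ m : Fin 6, dSO31Int m c d * r m a b)

def d4SOInt (t : Fin 6 → Fin 6 → Fin 6 → Fin 6 → ℤ) (a b c d e : Fin 6) : ℤ :=
  (∑ m : Fin 6, dSO31Int m a b * t m c d e) - (∑ m : Fin 6, dSO31Int m a c * t m b d e)
  + (∑ m : Fin 6, dSO31Int m a d * t m b c e) - (∑ m : Fin 6, dSO31Int m a e * t m b c d)
  + (∑ m : Fin 6, dSO31Int m b c * t m a d e) - (∑ m : Fin 6, dSO31Int m b d * t m a c e)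
  + (∑ m : Fin 6, dSO31Int m b e * t m a c d) + (∑ m : Fin 6, dSO31Int m c d * t m a b e)
  - (∑ m : Fin 6, dSO31Int m c e * t m a b d) + (∑ m : Fin 6, dSO31Int m d e * t m a b c)

theorem wf_eq_cast (a b i j : Fin 6) : wf a b i j = wfInt a b i j := by
  simp [wf, wfInt, kron]

theorem tf_eq_cast (a b c i j k : Fin 6) : tf a b c i j k = tfInt a b c i j k := by
  simp [tf, tfInt, kron]

theorem dSO31_eq_cast (k i j : Fin 6) : dSO31 k i j = dSO31Int k i j := by
  fin_cases k <;> simp [dSO31, dSO31Int, wf_eq_cast]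

theorem omSO_eq_cast (i j : Fin 6) : omSO i j = omSOInt i j := by
  simp [omSO, omSOInt, wf_eq_cast]

theorem rhoSO_eq_cast : rhoSO = fun i j k => (rhoSOInt i j k : ℝ) := by
  ext i j k
  simp [rhoSO, rhoSOInt, tf_eq_cast]

theorem omomSO_eq_cast : omomSO = fun i j k l => (omomSOInt i j k l : ℝ) := by
  ext i j k l
  simp [omomSO_eq, omomSOInt, omSO_eq_cast]

theorem d3SO_intCast (r : Fin 6 → Fin 6 → Fin 6 → ℤ) (a b c d : Fin 6) :
    d3SO (fun i j k => r i j k) a b c d = d3SOInt r a b c d := by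
  simp only [d3SO, d3SOInt, BcSO31, dSO31_eq_cast, neg_mul, Finset.sum_neg_distrib]
  push_cast
  ring

theorem d4SO_intCast (t : Fin 6 → Fin 6 → Fin 6 → Fin 6 → ℤ) (a b c d e : Fin 6) :
    d4SO (fun i j k l => t i j k l) a b c d e = d4SOInt t a b c d e := by
  simp only [d4SO, d4SOInt, BcSO31, dSO31_eq_cast, neg_mul, Finset.sum_neg_distrib]
  push_cast
  ring

set_option maxRecDepth 100000 in
theorem d3SOInt_rhoSOInt : ∀ a b c d, d3SOInt rhoSOInt a b c d = 0 := by decide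

set_option maxRecDepth 100000 in
theorem d4SOInt_omomSOInt : ∀ a b c d e, d4SOInt omomSOInt a b c d e = 0 := by decide

/-- On so(3,1): dρ = 0 and d(ω∧ω) = 0. -/
theorem so31_half_flat_pair :
    (∀ a b c d : Fin 6, d3SO rhoSO a b c d = 0) ∧
    (∀ a b c d e : Fin 6, d4SO omomSO a b c d e = 0) := by
  refine ⟨fun a b c d => ?_, fun a b c d e => ?_⟩
  · rw [rhoSO_eq_cast, d3SO_intCast, d3SOInt_rhoSOInt, Int.cast_zero]
  · rw [omomSO_eq_cast, d4SO_intCast, d4SOInt_omomSOInt, Int.cast_zero]
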